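/- arXiv:1908.03788 — 2 statements merged into one kernel-verified Lean document; each statement's English description precedes it below -/
import Mathlib

section
/- Every chordal graph on at least one vertex has a simplicial vertex. -/
variable {V : Type*}

/-- `p` is an induced path on `k` vertices in `G`: injective, and adjacency holds
exactly between consecutive vertices. -/
def IsInducedPathOn (G : SimpleGraph V) (k : ℕ) (p : Fin k → V) : Prop :=
  Function.Injective p ∧
    ∀ i j : Fin k, G.Adj (p i) (p j) ↔ (i.val + 1 = j.val ∨ j.val + 1 = i.val)

/-- `c` is an induced cycle on `n ≥ 3` vertices in `G`: injective, and adjacency holds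
exactly between cyclically consecutive vertices. -/
def IsInducedCycleOn (G : SimpleGraph V) (n : ℕ) (c : Fin n → V) : Prop :=
  3 ≤ n ∧ Function.Injective c ∧
    ∀ i j : Fin n, G.Adj (c i) (c j) ↔ ((i.val + 1) % n = j.val ∨ (j.val + 1) % n = i.val)

/-- The vertices of `q` all lie on some induced cycle of `G`. -/
def InInducedCycle (G : SimpleGraph V) {m : ℕ} (q : Fin m → V) : Prop :=
  ∃ (n : ℕ) (c : Fin n → V), IsInducedCycleOn G n c ∧ Set.range q ⊆ Set.range c

/-- `q` is an extension of the induced path `p`: an induced path on `k+2` vertices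
whose middle `k` vertices are `p` (one new vertex at each end). -/
def IsExtension (G : SimpleGraph V) {k : ℕ} (p : Fin k → V) (q : Fin (k + 2) → V) : Prop :=
  IsInducedPathOn G (k + 2) q ∧ ∀ i : Fin k, q i.succ.castSucc = p i

/-- `p` is an avoidable path in `G`: an induced path each of whose extensions lies on an
induced cycle of `G`. -/
def IsAvoidable (G : SimpleGraph V) {k : ℕ} (p : Fin k → V) : Prop :=
  IsInducedPathOn G k p ∧
    ∀ q : Fin (k + 2) → V, IsExtension G p q → InInducedCycle G q

/-- `v` is an avoidable vertex: every induced path `x–v–y` lies on an induced cycle. -/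
def AvoidableVertex (G : SimpleGraph V) (v : V) : Prop :=
  ∀ x y : V, G.Adj x v → G.Adj v y → x ≠ y → ¬ G.Adj x y → InInducedCycle G ![x, v, y]

/-- `v` lies outside the closed neighbourhood of `w`. -/
def OutsideClosedNbhd (G : SimpleGraph V) (w v : V) : Prop :=
  v ≠ w ∧ ¬ G.Adj w v

/-- Property `H_R(G,k,w)`: either `G − N[w]` has no induced path on `k` vertices,
or there is an induced path on `k` vertices inside `G − N[w]` avoidable in `G`. -/
def HR (G : SimpleGraph V) (k : ℕ) (w : V) : Prop :=
  (¬ ∃ p : Fin k → V, IsInducedPathOn G k p ∧ ∀ i, OutsideClosedNbhd G w (p i)) ∨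
  (∃ p : Fin k → V, IsInducedPathOn G k p ∧ (∀ i, OutsideClosedNbhd G w (p i)) ∧
    ∀ q : Fin (k + 2) → V, IsExtension G p q → InInducedCycle G q)

/-- The graph obtained from `G` by merging adjacent vertices `u₁, u₂` into one vertex
(represented by `u₁`, with `u₂` becoming an isolated stray vertex). -/
def mergeGraph (G : SimpleGraph V) (u₁ u₂ : V) : SimpleGraph V where
  Adj a b := a ≠ b ∧ a ≠ u₂ ∧ b ≠ u₂ ∧
    (G.Adj a b ∨ (a = u₁ ∧ G.Adj u₂ b) ∨ (b = u₁ ∧ G.Adj a u₂))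
  symm := ⟨by
    rintro a b ⟨h1, h2, h3, h4⟩
    refine ⟨h1.symm, h3, h2, ?_⟩
    rcases h4 with h | ⟨ha, h⟩ | ⟨hb, h⟩
    · exact Or.inl h.symm
    · exact Or.inr (Or.inr ⟨ha, h.symm⟩)
    · exact Or.inr (Or.inl ⟨hb, h.symm⟩)⟩
  loopless := ⟨fun a h => h.1 rfl⟩

/-- `G` is chordal: every induced cycle has exactly three vertices. -/
def Chordal (G : SimpleGraph V) : Prop :=
  ∀ (n : ℕ) (c : Fin n → V), IsInducedCycleOn G n c → n = 3

/-- `v` is a simplicial vertex: its neighbourhood is a clique. -/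
def SimplicialVertex (G : SimpleGraph V) (v : V) : Prop :=
  ∀ x y : V, G.Adj v x → G.Adj v y → x ≠ y → G.Adj x y

/-!
Following Dirac, induct on the number of vertices, proving more generally that a chordal graph
has a simplicial vertex outside any clique `K` that is not the whole vertex set. If `G` is not
complete, choose a non-universal vertex `a` with `K ⊆ N[a]`, a component `C` of `G - N[a]`, and
let `S ⊆ N(a)` be the set of neighbours of `C`. Two nonadjacent `x, y ∈ S` would close an induced
cycle of length at least four: `a`, `x`, a shortest `x`–`y` path through `C`, `y`. Hence `S` is a
clique, and the induction hypothesis for `G[C ∪ S]` (which misses `a`) and the clique `S` yields a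
vertex of `C` simplicial in `G[C ∪ S]`, hence in `G`, since `N(C) ⊆ S`.
-/

namespace SimpleGraph

variable {G : SimpleGraph V}

theorem Walk.dist_getVert_getVert {u v : V} {p : G.Walk u v} (hp : p.length = G.dist u v)
    {i j : ℕ} (hij : i ≤ j) (hj : j ≤ p.length) :
    G.dist (p.getVert i) (p.getVert j) = j - i := by
  have h := length_eq_dist_of_subwalk hp
    (((p.drop i).isSubwalk_take (j - i)).trans (p.isSubwalk_drop i))
  rw [Walk.take_length, Walk.drop_length, Walk.drop_getVert, Nat.add_sub_cancel' hij] at h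
  omega

theorem Reachable.exists_isInducedPathOn {x y : V} (h : G.Reachable x y) :
    ∃ (k : ℕ) (p : Fin (k + 1) → V),
      IsInducedPathOn G (k + 1) p ∧ p 0 = x ∧ p (Fin.last k) = y := by
  obtain ⟨w, hw⟩ := h.exists_walk_length_eq_dist
  have hdist : ∀ i j : Fin (w.length + 1), i ≤ j →
      G.dist (w.getVert i) (w.getVert j) = j - i := fun i j hij =>
    Walk.dist_getVert_getVert hw hij (Nat.lt_succ_iff.mp j.isLt)
  refine ⟨w.length, fun i => w.getVert i, ⟨fun i j hij => ?_, fun i j => ?_⟩, w.getVert_zero,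
    w.getVert_length⟩
  · wlog hle : i ≤ j generalizing i j
    · exact (this j i hij.symm (le_of_not_ge hle)).symm
    have := hdist i j hle
    simp only [hij, dist_self] at this
    exact Fin.ext (by omega)
  · wlog hle : i ≤ j generalizing i j
    · rw [adj_comm, this j i (le_of_not_ge hle), or_comm]
    rw [← dist_eq_one_iff_adj, hdist i j hle]
    omega

end SimpleGraph

theorem IsInducedPathOn.map {W : Type*} {H : SimpleGraph W} {G : SimpleGraph V} (f : H ↪g G)
    {k : ℕ} {p : Fin k → W} (hp : IsInducedPathOn H k p) : IsInducedPathOn G k (f ∘ p) :=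
  ⟨f.injective.comp hp.1, fun i j => by simpa using hp.2 i j⟩

theorem Chordal.comap {W : Type*} {H : SimpleGraph W} {G : SimpleGraph V} (f : H ↪g G)
    (hG : Chordal G) : Chordal H := fun n c hc =>
  hG n (f ∘ c) ⟨hc.1, f.injective.comp hc.2.1, fun i j => by simpa using hc.2.2 i j⟩

theorem add_one_mod_eq_iff {i j n : ℕ} (hi : i < n) (hj : j < n) :
    (i + 1) % n = j ↔ i + 1 = j ∨ (i + 1 = n ∧ j = 0) := by
  rcases (show i + 1 ≤ n by omega).lt_or_eq with h | h
  · rw [Nat.mod_eq_of_lt h]; omega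
  · rw [h, Nat.mod_self]; omega

theorem IsInducedPathOn.isInducedCycleOn_cons {G : SimpleGraph V} {k : ℕ} {p : Fin (k + 1) → V}
    {a : V} (hp : IsInducedPathOn G (k + 1) p) (hk : 1 ≤ k) (ha : ∀ i, p i ≠ a)
    (hadj : ∀ i, G.Adj a (p i) ↔ (i = 0 ∨ i = Fin.last k)) :
    IsInducedCycleOn G (k + 2) (Fin.cons a p : Fin (k + 2) → V) := by
  refine ⟨by omega, Fin.cons_injective_iff.mpr ⟨fun ⟨i, hi⟩ => ha i hi, hp.1⟩, fun i j => ?_⟩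
  have hmod : ∀ i j : Fin (k + 2), (i.val + 1) % (k + 2) = j ↔
      i.val + 1 = j ∨ (i.val + 1 = k + 2 ∧ j.val = 0) := fun i j =>
    add_one_mod_eq_iff i.isLt j.isLt
  rw [hmod, hmod]
  cases i using Fin.cases <;> cases j using Fin.cases <;>
    simp only [Fin.cons_zero, Fin.cons_succ, Fin.val_zero, Fin.val_succ, hp.2, hadj,
      G.irrefl, Fin.ext_iff, Fin.val_last, G.adj_comm _ a] <;> grind

theorem Chordal.adj_of_reachable_outsideClosedNbhd {G : SimpleGraph V} (hG : Chordal G)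
    {a x y : V} {T : Set V} (hT : ∀ v ∈ T, OutsideClosedNbhd G a v) (hx : G.Adj a x)
    (hy : G.Adj a y) (hxy : x ≠ y)
    (hreach : (G.induce (insert x (insert y T))).Reachable ⟨x, by simp⟩ ⟨y, by simp⟩) :
    G.Adj x y := by
  obtain ⟨k, q, hq, hq0, hqk⟩ := hreach.exists_isInducedPathOn
  have hp := hq.map (SimpleGraph.Embedding.induce _)
  set p : Fin (k + 1) → V := (SimpleGraph.Embedding.induce _) ∘ q
  have hp0 : p 0 = x := congrArg Subtype.val hq0
  have hpk : p (Fin.last k) = y := congrArg Subtype.val hqk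
  have hk : 1 ≤ k := by
    by_contra hk
    obtain rfl : k = 0 := by omega
    exact hxy (hp0.symm.trans hpk)
  have hinner : ∀ i, i ≠ 0 → i ≠ Fin.last k → OutsideClosedNbhd G a (p i) := by
    intro i hi0 hik
    rcases (q i).2 with h | h | h
    · exact absurd (hp.1 (h.trans hp0.symm)) hi0
    · exact absurd (hp.1 (h.trans hpk.symm)) hik
    · exact hT _ h
  have hcycle : IsInducedCycleOn G (k + 2) (Fin.cons a p : Fin (k + 2) → V) := by
    refine hp.isInducedCycleOn_cons hk (fun i => ?_) (fun i => ?_)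
    · by_cases hi0 : i = 0
      · exact hi0 ▸ hp0 ▸ hx.ne.symm
      by_cases hik : i = Fin.last k
      · exact hik ▸ hpk ▸ hy.ne.symm
      exact (hinner i hi0 hik).1
    · by_cases hi0 : i = 0
      · simpa [hi0, hp0] using hx
      by_cases hik : i = Fin.last k
      · simpa [hik, hpk] using hy
      simpa [hi0, hik] using (hinner i hi0 hik).2
  have hk1 : k = 1 := by have := hG _ _ hcycle; omega
  subst hk1
  rw [← hp0, ← hpk, hp.2]
  simp

def closedNbhdCompl (G : SimpleGraph V) (a : V) : Set V := {v | OutsideClosedNbhd G a v}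

section Component

variable {G : SimpleGraph V} {a : V}

def componentBoundary (c : (G.induce (closedNbhdCompl G a)).ConnectedComponent) : Set V :=
  {s | G.Adj a s ∧ ∃ v ∈ c, G.Adj v s}

theorem adj_mem_or_mem_componentBoundary
    {c : (G.induce (closedNbhdCompl G a)).ConnectedComponent} {v : closedNbhdCompl G a}
    (hv : v ∈ c) {w : V} (hvw : G.Adj v w) :
    w ∈ Subtype.val '' (c : Set (closedNbhdCompl G a)) ∨ w ∈ componentBoundary c := by
  by_cases hw : OutsideClosedNbhd G a w
  · exact Or.inl ⟨⟨w, hw⟩, (c.mem_supp_congr_adj (v := v) (w := ⟨w, hw⟩) hvw).mp hv, rfl⟩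
  · refine Or.inr ⟨?_, v, hv, hvw⟩
    by_contra haw
    obtain rfl : w = a := by_contra fun hwa => hw ⟨hwa, haw⟩
    exact v.2.2 hvw.symm

theorem Chordal.isClique_componentBoundary (hG : Chordal G)
    (c : (G.induce (closedNbhdCompl G a)).ConnectedComponent) :
    G.IsClique (componentBoundary c) := by
  rintro x ⟨hax, u, hu, hux⟩ y ⟨hay, w, hw, hwy⟩ hxy
  refine hG.adj_of_reachable_outsideClosedNbhd (fun v hv => hv) hax hay hxy ?_
  have huw : (G.induce (closedNbhdCompl G a)).Reachable u w :=
    SimpleGraph.ConnectedComponent.exact (hu.trans hw.symm)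
  let f := G.induceHomOfLE (s' := insert x (insert y (closedNbhdCompl G a)))
    (Set.subset_insert _ _ |>.trans (Set.subset_insert _ _))
  have hxu : (G.induce _).Adj ⟨x, by simp⟩ (f u) := hux.symm
  have hwy' : (G.induce _).Adj (f w) ⟨y, by simp⟩ := hwy
  exact hxu.reachable.trans ((huw.map f.toHom).trans hwy'.reachable)

end Component

theorem SimplicialVertex.of_induce {G : SimpleGraph V} {U : Set V} {v : U}
    (hv : SimplicialVertex (G.induce U) v) (hN : ∀ w, G.Adj v w → w ∈ U) :
    SimplicialVertex G v := fun x y hx hy hxy =>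
  hv ⟨x, hN x hx⟩ ⟨y, hN y hy⟩ hx hy (fun h => hxy (congrArg Subtype.val h))

theorem exists_outsideClosedNbhd_of_isClique {G : SimpleGraph V} {K : Set V}
    (hK : G.IsClique K) (h : ∃ u v, u ≠ v ∧ ¬ G.Adj u v) :
    ∃ a b, OutsideClosedNbhd G a b ∧ ∀ k ∈ K, ¬ OutsideClosedNbhd G a k := by
  by_cases hKa : ∃ a ∈ K, ∃ b, OutsideClosedNbhd G a b
  · obtain ⟨a, haK, b, hab⟩ := hKa
    exact ⟨a, b, hab, fun k hk hak => hak.2 (hK haK hk hak.1.symm)⟩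
  · push Not at hKa
    obtain ⟨u, v, huv, hnadj⟩ := h
    refine ⟨u, v, ⟨huv.symm, hnadj⟩, fun k hk huk => ?_⟩
    by_cases hku : u = k
    · exact huk.1 hku.symm
    · exact huk.2 (by_contra fun h => hKa k hk u ⟨hku, fun h' => h h'.symm⟩)

theorem Chordal.exists_simplicialVertex_not_mem [Finite V] {G : SimpleGraph V} (hG : Chordal G)
    {K : Set V} (hK : G.IsClique K) (hKV : ∃ v, v ∉ K) : ∃ v ∉ K, SimplicialVertex G v := by
  induction hn : Nat.card V using Nat.strong_induction_on generalizing V with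
  | _ n ih =>
  by_cases hcomplete : ∀ u v, u ≠ v → G.Adj u v
  · obtain ⟨v, hv⟩ := hKV
    exact ⟨v, hv, fun x y _ _ hxy => hcomplete x y hxy⟩
  push Not at hcomplete
  obtain ⟨a, b, hab, haK⟩ := exists_outsideClosedNbhd_of_isClique hK hcomplete
  set c := (G.induce (closedNbhdCompl G a)).connectedComponentMk ⟨b, hab⟩
  set C := Subtype.val '' (c : Set (closedNbhdCompl G a))
  set U := C ∪ componentBoundary c
  have hbC : b ∈ C := ⟨⟨b, hab⟩, rfl, rfl⟩
  have haU : a ∉ U := by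
    rintro (⟨v, -, hva⟩ | ⟨haa, -⟩)
    exacts [v.2.1 hva, G.irrefl haa]
  have hS : (G.induce U).IsClique {u | u.1 ∈ componentBoundary c} :=
    fun u hu w hw huw => hG.isClique_componentBoundary c hu hw (Subtype.val_injective.ne huw)
  obtain ⟨v, hvS, hv⟩ := ih _ (hn ▸ Finite.card_subtype_lt haU)
    (hG.comap (SimpleGraph.Embedding.induce U)) hS ⟨⟨b, Or.inl hbC⟩, fun h => hab.2 h.1⟩ rfl
  obtain ⟨⟨v', hv'⟩, hvc, hvv'⟩ := v.2.resolve_right hvS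
  refine ⟨v, fun hvK => haK v hvK (hvv' ▸ hv'), hv.of_induce fun w hw => ?_⟩
  subst hvv'
  exact adj_mem_or_mem_componentBoundary hvc hw

/-- Every chordal graph on at least one vertex has a simplicial vertex. -/
theorem stmt3 [Fintype V] [Nonempty V] (G : SimpleGraph V) (hG : Chordal G) :
    ∃ v : V, SimplicialVertex G v := by
  obtain ⟨v, -, hv⟩ :=
    hG.exists_simplicialVertex_not_mem G.isClique_empty ⟨Classical.arbitrary V, Set.notMem_empty _⟩
  exact ⟨v, hv⟩
end

section
/- Let G be a graph with a vertex u, and suppose every induced path on k vertices contained in G − N[u] dominates N(u). If Q is an induced path on k vertices in G − N[u] that has no failing extension within G − N[u], and x–Q–y is a failing extension of Q in G with y ∈ N(u), then x ∉ N(u). -/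
/-! If `x` were also a neighbour of `u`, then `u` would see exactly the two ends of the induced
path `x–Q–y`, whose interior `Q` avoids `N[u]`; appending `u` would then close `x–Q–y` into an
induced cycle, contradicting that the extension fails. -/

variable {V : Type*}

lemma IsExtension.exists_eq_of_ne_zero_of_ne_last {G : SimpleGraph V} {k : ℕ} {p : Fin k → V}
    {q : Fin (k + 2) → V} (hq : IsExtension G p q) {i : Fin (k + 2)} (h0 : i ≠ 0)
    (hlast : i ≠ Fin.last (k + 1)) : ∃ j, q i = p j := by
  obtain ⟨i', rfl⟩ := Fin.exists_castSucc_eq.mpr hlast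
  obtain ⟨j, rfl⟩ := (Fin.exists_succ_eq (x := i')).mpr fun h => h0 (by rw [h, Fin.castSucc_zero])
  exact ⟨j, hq.2 j⟩

lemma IsInducedPathOn.isInducedCycleOn_snoc {G : SimpleGraph V} {m : ℕ} {p : Fin (m + 2) → V}
    (hp : IsInducedPathOn G (m + 2) p) {w : V} (h0 : G.Adj w (p 0))
    (hlast : G.Adj w (p (Fin.last (m + 1))))
    (hmid : ∀ i, i ≠ 0 → i ≠ Fin.last (m + 1) → OutsideClosedNbhd G w (p i)) :
    IsInducedCycleOn G (m + 3) (Fin.snoc p w) := by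
  have hinterior : ∀ i : Fin (m + 2), i.val ≠ 0 → i.val ≠ m + 1 →
      OutsideClosedNbhd G w (p i) := fun i hi0 hil =>
    hmid i (Fin.val_ne_iff.mp hi0) (Fin.val_ne_iff.mp (by simpa using hil))
  have hadj : ∀ i : Fin (m + 2), G.Adj w (p i) ↔ (i.val = 0 ∨ i.val = m + 1) := by
    intro i
    refine ⟨fun h => ?_, ?_⟩
    · by_contra hend
      push Not at hend
      exact (hinterior i hend.1 hend.2).2 h
    · rintro (h | h)
      · rwa [show i = 0 from Fin.ext h]
      · rwa [show i = Fin.last (m + 1) from Fin.ext h]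
  have hne : ∀ i : Fin (m + 2), p i ≠ w := by
    intro i
    by_cases hend : i.val = 0 ∨ i.val = m + 1
    · exact ((hadj i).mpr hend).ne'
    · push Not at hend
      exact (hinterior i hend.1 hend.2).1
  have hsucc : ∀ i : Fin (m + 2), (i.val + 1) % (m + 3) = i.val + 1 := fun i =>
    Nat.mod_eq_of_lt (by omega)
  have hwrap : (m + 2 + 1) % (m + 3) = 0 := Nat.mod_self _
  refine ⟨by omega, ?_, ?_⟩
  · intro a b hab
    induction a using Fin.lastCases <;> induction b using Fin.lastCases <;>
      simp_all [Fin.snoc_castSucc, Fin.snoc_last, hp.1.eq_iff, (hne _).symm]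
  · intro i j
    induction i using Fin.lastCases <;> induction j using Fin.lastCases <;>
      simp only [Fin.snoc_castSucc, Fin.snoc_last, Fin.val_castSucc, Fin.val_last, hp.2,
        hadj, G.adj_comm _ w, hsucc, hwrap, SimpleGraph.irrefl, false_iff]
    all_goals omega

theorem stmt16_general (k : ℕ) (G : SimpleGraph V) (u : V)
    (Q : Fin k → V) (hQout : ∀ i, OutsideClosedNbhd G u (Q i))
    (q : Fin (k + 2) → V) (hq : IsExtension G Q q) (hfail : ¬ InInducedCycle G q)
    (hy : G.Adj u (q (Fin.last (k + 1)))) :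
    ¬ G.Adj u (q 0) := by
  intro hx
  refine hfail ⟨k + 3, Fin.snoc q u, hq.1.isInducedCycleOn_snoc hx hy fun i h0 hlast => ?_, ?_⟩
  · obtain ⟨j, hj⟩ := hq.exists_eq_of_ne_zero_of_ne_last h0 hlast
    exact hj ▸ hQout j
  · rintro v ⟨i, rfl⟩
    exact ⟨i.castSucc, Fin.snoc_castSucc ..⟩

/-- If every induced `P_k` in `G − N[u]` dominates `N(u)`, `Q` is an induced `P_k` in
`G − N[u]` with no failing extension within `G − N[u]`, and `x–Q–y` is a failing
extension of `Q` in `G` with `y ∈ N(u)`, then `x ∉ N(u)`. -/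
theorem stmt16 (k : ℕ) (hk : 1 ≤ k) (G : SimpleGraph V) (u : V)
    (hdom : ∀ p : Fin k → V, IsInducedPathOn G k p → (∀ i, OutsideClosedNbhd G u (p i)) →
      ∀ v : V, G.Adj u v → (∃ i, p i = v) ∨ (∃ i, G.Adj (p i) v))
    (Q : Fin k → V) (hQ : IsInducedPathOn G k Q) (hQout : ∀ i, OutsideClosedNbhd G u (Q i))
    (hnofail : ∀ q : Fin (k + 2) → V, IsExtension G Q q →
      (∀ i, OutsideClosedNbhd G u (q i)) →
      ∃ (n : ℕ) (c : Fin n → V), IsInducedCycleOn G n c ∧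
        (∀ j, OutsideClosedNbhd G u (c j)) ∧ Set.range q ⊆ Set.range c)
    (q : Fin (k + 2) → V) (hq : IsExtension G Q q) (hfail : ¬ InInducedCycle G q)
    (hy : G.Adj u (q (Fin.last (k + 1)))) :
    ¬ G.Adj u (q 0) :=
  stmt16_general k G u Q hQout q hq hfail hy
end
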